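/- arXiv:2205.04398 — 2 statements merged into one kernel-verified Lean document; each statement's English description precedes it below -/
import Mathlib

section
/- Let G be a vertex-minimal toroidal graph with no proper odd colouring using at most 9 colours, and suppose v is a vertex of G of degree 5. Then v has at most one neighbour of odd degree. -/
open scoped Classical
open Finset

/-- The colouring `c` is *odd at* `v`: some colour appears an odd number of
times in the neighbourhood of `v`. -/
def SimpleGraph.IsOddAt {V α : Type} [Fintype V] (G : SimpleGraph V)
    (c : V → α) (v : V) : Prop :=
  ∃ a : α, Odd ((G.neighborFinset v).filter fun w => c w = a).card

/-- `c` is a proper odd vertex-colouring of `G`. -/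
def SimpleGraph.IsProperOdd {V α : Type} [Fintype V] (G : SimpleGraph V)
    (c : V → α) : Prop :=
  (∀ u w : V, G.Adj u w → c u ≠ c w) ∧
  ∀ v : V, 0 < G.degree v → G.IsOddAt c v

/-- `G` has a proper odd colouring with at most 9 colours. -/
def SimpleGraph.HasNice {V : Type} [Fintype V] (G : SimpleGraph V) : Prop :=
  ∃ c : V → Fin 9, G.IsProperOdd c


/-!
Colour `G - v` by minimality and give `v` a new colour. As `deg v = 5` is odd, `v` and every
vertex of odd degree are odd under any colouring; the only vertices whose odd colour `v` can
destroy are its neighbours of even degree. So it suffices that `v` avoids the colours of its five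
neighbours and one odd colour of each even-degree neighbour: with at least two odd-degree
neighbours that forbids at most `5 + 3 = 8 < 9` colours.
-/

namespace SimpleGraph

variable {V α : Type}

section Extension

variable {v : V}

noncomputable def extendAt (c : {x : V // x ≠ v} → α) (b : α) : V → α :=
  fun x => if h : x = v then b else c ⟨x, h⟩

@[simp] theorem extendAt_self (c : {x : V // x ≠ v} → α) (b : α) : extendAt c b v = b :=
  dif_pos rfl

@[simp] theorem extendAt_coe (c : {x : V // x ≠ v} → α) (b : α) (w : {x : V // x ≠ v}) :
    extendAt c b w = c w :=
  dif_neg w.2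

end Extension

variable [Fintype V] (G : SimpleGraph V)

theorem isOddAt_of_odd_degree (c : V → α) {u : V} (hu : Odd (G.degree u)) : G.IsOddAt c u := by
  by_contra hc
  simp only [IsOddAt, not_exists, Nat.not_odd_iff_even] at hc
  rw [← card_neighborFinset_eq_degree, card_eq_sum_card_image c] at hu
  exact Nat.not_odd_iff_even.mpr (even_sum _ fun a _ => hc a) hu

variable (v : V)

theorem map_neighborFinset_induce_ne (w : {x : V // x ≠ v}) :
    ((G.induce {x | x ≠ v}).neighborFinset w).map (Function.Embedding.subtype _)
      = (G.neighborFinset w).erase v := by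
  ext x
  simp only [mem_map, mem_neighborFinset, mem_erase, Function.Embedding.subtype_apply,
    Subtype.exists, exists_and_right, exists_eq_right, induce_adj]
  exact ⟨fun ⟨hx, hadj⟩ => ⟨hx, hadj⟩, fun ⟨hx, hadj⟩ => ⟨hx, hadj⟩⟩

theorem degree_induce_ne (w : {x : V // x ≠ v}) :
    (G.induce {x | x ≠ v}).degree w = ((G.neighborFinset w).erase v).card := by
  rw [← card_neighborFinset_eq_degree, ← map_neighborFinset_induce_ne, card_map]

variable {v}

theorem degree_induce_ne_pos {w : {x : V // x ≠ v}} (hadj : G.Adj v w)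
    (heven : ¬Odd (G.degree w)) : 0 < (G.induce {x | x ≠ v}).degree w := by
  have hvw : v ∈ G.neighborFinset w := by simpa using hadj.symm
  have hpos := G.degree_pos_iff_exists_adj w |>.mpr ⟨v, hadj.symm⟩
  have hge : 2 ≤ G.degree w := by grind
  rw [degree_induce_ne, card_erase_of_mem hvw, card_neighborFinset_eq_degree]
  omega

theorem card_filter_neighborFinset_extendAt (c : {x : V // x ≠ v} → α) (b : α)
    (w : {x : V // x ≠ v}) {a : α} (hba : G.Adj w v → b ≠ a) :
    #{x ∈ G.neighborFinset w | extendAt c b x = a}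
      = #{x ∈ (G.induce {x | x ≠ v}).neighborFinset w | c x = a} := by
  have hv : v ∉ {x ∈ G.neighborFinset w | extendAt c b x = a} := by
    simpa [mem_filter] using hba
  rw [← erase_eq_of_notMem hv, ← filter_erase, ← map_neighborFinset_induce_ne, filter_map,
    card_map]
  simp only [Function.comp_def, Function.Embedding.subtype_apply, extendAt_coe]
  rfl

theorem isProperOdd_extendAt {c : {x : V // x ≠ v} → α}
    (hc : (G.induce {x | x ≠ v}).IsProperOdd c) (hv : Odd (G.degree v)) {b : α}
    (hb_adj : ∀ w : {x : V // x ≠ v}, G.Adj v w → c w ≠ b)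
    (hb_odd : ∀ w : {x : V // x ≠ v}, G.Adj v w → ¬Odd (G.degree w) →
      ∃ a ≠ b, Odd #{x ∈ (G.induce {x | x ≠ v}).neighborFinset w | c x = a}) :
    G.IsProperOdd (extendAt c b) := by
  constructor
  · intro x y hxy
    by_cases hx : x = v
    · subst hx
      simpa [extendAt, hxy.ne'] using (hb_adj ⟨y, hxy.ne'⟩ hxy).symm
    by_cases hy : y = v
    · subst hy
      simpa [extendAt, hx] using hb_adj ⟨x, hx⟩ hxy.symm
    simpa [extendAt, hx, hy] using hc.1 ⟨x, hx⟩ ⟨y, hy⟩ hxy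
  · intro u hu
    by_cases hodd : Odd (G.degree u)
    · exact G.isOddAt_of_odd_degree _ hodd
    have huv : u ≠ v := by rintro rfl; exact hodd hv
    let w : {x : V // x ≠ v} := ⟨u, huv⟩
    by_cases hadj : G.Adj v u
    · obtain ⟨a, hab, ha⟩ := hb_odd w hadj hodd
      exact ⟨a, by rwa [G.card_filter_neighborFinset_extendAt c b w fun _ => hab.symm]⟩
    · have hvu : v ∉ G.neighborFinset u := by simpa using fun h => hadj h.symm
      have hw : 0 < (G.induce {x | x ≠ v}).degree w := by
        rwa [degree_induce_ne, erase_eq_of_notMem hvu, card_neighborFinset_eq_degree]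
      obtain ⟨a, ha⟩ := hc.2 w hw
      exact ⟨a, by rwa [G.card_filter_neighborFinset_extendAt c b w fun h => absurd h.symm hadj]⟩

theorem exists_isProperOdd_of_induce_ne [Fintype α] {c : {x : V // x ≠ v} → α}
    (hc : (G.induce {x | x ≠ v}).IsProperOdd c) (hv : Odd (G.degree v))
    (hcard : G.degree v + #{w ∈ G.neighborFinset v | ¬Odd (G.degree w)} < Fintype.card α) :
    ∃ d : V → α, G.IsProperOdd d := by
  have : Nonempty α := Fintype.card_pos_iff.mp (by omega)
  have hoddAt : ∀ w : {x : V // x ≠ v}, ∃ a, G.Adj v w → ¬Odd (G.degree w) →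
      Odd #{x ∈ (G.induce {x | x ≠ v}).neighborFinset w | c x = a} := by
    intro w
    by_cases hw : G.Adj v w ∧ ¬Odd (G.degree w)
    · obtain ⟨a, ha⟩ := hc.2 w (G.degree_induce_ne_pos hw.1 hw.2)
      exact ⟨a, fun _ _ => ha⟩
    · exact ⟨Classical.arbitrary α, fun h h' => absurd ⟨h, h'⟩ hw⟩
  choose oddColour hoddColour using hoddAt
  let forbidden := ((G.neighborFinset v).subtype (· ≠ v)).image c ∪
    ({w ∈ G.neighborFinset v | ¬Odd (G.degree w)}.subtype (· ≠ v)).image oddColour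
  have hforbidden : #forbidden < #(univ : Finset α) := calc
    #forbidden ≤ G.degree v + #{w ∈ G.neighborFinset v | ¬Odd (G.degree w)} := by
      refine (card_union_le _ _).trans (add_le_add ?_ ?_) <;>
      · refine card_image_le.trans ?_
        rw [card_subtype]
        exact card_filter_le _ _
    _ < _ := hcard
  obtain ⟨b, -, hb⟩ := exists_mem_notMem_of_card_lt_card hforbidden
  refine ⟨extendAt c b, G.isProperOdd_extendAt hc hv ?_ ?_⟩
  · rintro w hw rfl
    exact hb (mem_union_left _ (mem_image_of_mem c (by simpa using hw)))
  · intro w hw hodd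
    refine ⟨oddColour w, ?_, hoddColour w hw hodd⟩
    rintro rfl
    have hw' : w ∈ {w ∈ G.neighborFinset v | ¬Odd (G.degree w)}.subtype (· ≠ v) := by
      simp only [mem_subtype, mem_filter, mem_neighborFinset]
      exact ⟨hw, hodd⟩
    exact hb (mem_union_right _ (mem_image_of_mem oddColour hw'))

end SimpleGraph

theorem min_counterexample_five_vertex_odd_neighbours_general
    (Toroidal : ∀ (W : Type) [Fintype W] [DecidableEq W], SimpleGraph W → Prop)
    {V : Type} [Fintype V] [DecidableEq V] (G : SimpleGraph V)
    (hdel : ∀ v : V, Toroidal {x : V // x ≠ v} (G.induce {x : V | x ≠ v}))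
    (hno : ¬ G.HasNice)
    (hmin : ∀ (W : Type) [Fintype W] [DecidableEq W] (H : SimpleGraph W),
      Toroidal W H → Fintype.card W < Fintype.card V → H.HasNice)
    (v : V) (hv : G.degree v = 5) :
    ((G.neighborFinset v).filter fun w => Odd (G.degree w)).card ≤ 1 := by
  by_contra! hodd
  have hsmaller : Fintype.card {x : V // x ≠ v} < Fintype.card V :=
    Fintype.card_subtype_lt (x := v) (by simp)
  obtain ⟨c, hc⟩ := hmin _ _ (hdel v) hsmaller
  -- `convert` reconciles the `Fintype` instance on `G - v` built from `DecidableEq V` with the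
  -- classical one used in the lemmas.
  refine hno (G.exists_isProperOdd_of_induce_ne (by convert hc) (by rw [hv]; decide) ?_)
  have := card_filter_add_card_filter_not (s := G.neighborFinset v)
    (p := fun w => Odd (G.degree w))
  simp only [SimpleGraph.card_neighborFinset_eq_degree, hv] at this
  simp only [hv, Fintype.card_fin]
  omega

/-- In a vertex-minimal toroidal graph with no nice colouring, every vertex of
degree 5 has at most one neighbour of odd degree. -/
theorem min_counterexample_five_vertex_odd_neighbours
    (Toroidal : ∀ (W : Type) [Fintype W] [DecidableEq W], SimpleGraph W → Prop)
    {V : Type} [Fintype V] [DecidableEq V] (G : SimpleGraph V)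
    (hG : Toroidal V G)
    (hdel : ∀ v : V, Toroidal {x : V // x ≠ v} (G.induce {x : V | x ≠ v}))
    (hno : ¬ G.HasNice)
    (hmin : ∀ (W : Type) [Fintype W] [DecidableEq W] (H : SimpleGraph W),
      Toroidal W H → Fintype.card W < Fintype.card V → H.HasNice)
    (v : V) (hv : G.degree v = 5) :
    ((G.neighborFinset v).filter fun w => Odd (G.degree w)).card ≤ 1 :=
  min_counterexample_five_vertex_odd_neighbours_general Toroidal G hdel hno hmin v hv
end

section
/- Let G be a vertex-minimal toroidal graph admitting no proper odd colouring with at most 9 colours. Then G does not contain two adjacent vertices u, v both of degree 5 that have two common neighbours. -/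
open scoped Classical
open Finset

/-!
Contract the edge `uv` into `u`. By minimality the contraction has a proper odd 9-colouring; keep
it off `{u, v}` and give `u`, `v` new colours `b ≠ a`. Oddness at `u` and `v` is automatic (degree
5), and vertices adjacent to neither keep their coloured neighbourhoods. With `k ≥ 2` common
neighbours, each of `u`, `v` has `4 - k` private neighbours, each of which rules out at most one
colour (the one making its neighbourhood even), on top of the four colours next to it: this leaves
`k + 1` colours for each of `u` and `v`, hence `k (k + 1)` ordered pairs with `b ≠ a`. A common
neighbour rules out at most two ordered pairs, and `k (k + 1) > 2 k`.
-/

section ColourParity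

variable {V α : Type*} [DecidableEq α]

def colourParity (c : V → α) (S : Finset V) : α → ZMod 2 :=
  fun t => (#(S.filter (c · = t)) : ZMod 2)

theorem colourParity_ne_zero_iff {c : V → α} {S : Finset V} :
    colourParity c S ≠ 0 ↔ ∃ t, Odd #(S.filter (c · = t)) := by
  simp only [Ne, funext_iff, not_forall, colourParity, Pi.zero_apply,
    ZMod.natCast_eq_zero_iff_even, Nat.not_even_iff_odd]

theorem colourParity_ne_zero_of_odd_card {c : V → α} {S : Finset V} (hS : Odd #S) :
    colourParity c S ≠ 0 := by
  intro h
  have hsum : (#S : ZMod 2) = ∑ t ∈ S.image c, colourParity c S t := by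
    rw [card_eq_sum_card_fiberwise fun z hz => mem_image_of_mem c hz]
    push_cast [colourParity]
    rfl
  rw [h] at hsum
  simp only [Pi.zero_apply, sum_const_zero, ZMod.natCast_eq_zero_iff_even] at hsum
  exact Nat.not_even_iff_odd.mpr hS hsum

theorem colourParity_congr {c c' : V → α} {S : Finset V} (h : ∀ z ∈ S, c z = c' z) :
    colourParity c S = colourParity c' S := by
  funext t
  simp only [colourParity]
  congr 2
  exact filter_congr fun z hz => by rw [h z hz]

theorem colourParity_map {W : Type*} (c : V → α) (f : W ↪ V) (S : Finset W) :
    colourParity c (S.map f) = colourParity (c ∘ f) S := by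
  funext t
  simp only [colourParity, filter_map, card_map, Function.comp_def]

theorem colourParity_eq_erase_add [DecidableEq V] (c : V → α) (S : Finset V) (z : V) :
    colourParity c S =
      colourParity c (S.erase z) + if z ∈ S then Pi.single (c z) 1 else 0 := by
  funext t
  split_ifs with hz
  · conv_lhs => rw [← insert_erase hz]
    by_cases hzt : c z = t
    · simp [colourParity, filter_insert, hzt]
    · simp [colourParity, filter_insert, hzt, Ne.symm hzt]
  · rw [erase_eq_of_notMem hz, add_zero]

theorem colourParity_update_update [DecidableEq V] (c : V → α) (S : Finset V) {u v : V}
    (huv : u ≠ v) (a b : α) :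
    colourParity (Function.update (Function.update c u b) v a) S =
      colourParity c (S \ {u, v}) + (if u ∈ S then Pi.single b 1 else 0) +
        if v ∈ S then Pi.single a 1 else 0 := by
  rw [colourParity_eq_erase_add _ S v, colourParity_eq_erase_add _ (S.erase v) u,
    sdiff_insert, sdiff_singleton_eq_erase]
  simp only [mem_erase, ne_eq, huv, not_false_eq_true, true_and, Function.update_self,
    Function.update_of_ne huv]
  congr 2
  exact colourParity_congr fun z hz => by
    simp only [mem_erase] at hz
    rw [Function.update_of_ne hz.2.1, Function.update_of_ne hz.1]

end ColourParity

theorem Pi.single_left_injective {α M : Type*} [DecidableEq α] [Zero M] {m : M} (hm : m ≠ 0) :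
    Function.Injective fun a : α => Pi.single a m := by
  intro a b h
  by_contra hab
  have := congr_fun h a
  simp only [Pi.single_eq_same, Pi.single_eq_of_ne' (Ne.symm hab)] at this
  exact hm this

section SingleSums

variable {α M : Type*} [DecidableEq α] [Fintype α] [AddCommGroup M] [DecidableEq M] {m : M}

theorem card_filter_add_single_eq_zero_le_one (hm : m ≠ 0) (f : α → M) :
    #(univ.filter fun b => f + Pi.single b m = 0) ≤ 1 := by
  refine card_le_one.2 fun b hb b' hb' => Pi.single_left_injective hm ?_
  simp only [mem_filter, mem_univ, true_and] at hb hb'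
  exact add_left_cancel (hb.trans hb'.symm)

theorem card_filter_add_single_add_single_eq_zero_le_two (hm : m ≠ 0) (f : α → M) :
    #(univ.filter fun q : α × α => q.1 ≠ q.2 ∧ f + Pi.single q.1 m + Pi.single q.2 m = 0) ≤
      2 := by
  set P := univ.filter fun q : α × α => q.1 ≠ q.2 ∧ f + Pi.single q.1 m + Pi.single q.2 m = 0
  rcases P.eq_empty_or_nonempty with hP | ⟨q₀, hq₀⟩
  · simp [hP]
  have hsum : ∀ q ∈ P, (Pi.single q.1 m + Pi.single q.2 m : α → M) =
      Pi.single q₀.1 m + Pi.single q₀.2 m := by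
    intro q hq
    simp only [P, mem_filter, mem_univ, true_and, add_assoc] at hq hq₀
    exact add_left_cancel (hq.2.trans hq₀.2.symm)
  calc #P ≤ #({q₀.1, q₀.2} : Finset α) := card_le_card_of_injOn Prod.fst ?_ ?_
    _ ≤ 2 := card_le_two
  · -- `q.1` lies in the support of `single q₀.1 m + single q₀.2 m`
    intro q hq
    have hq1 := congr_fun (hsum q hq) q.1
    simp only [P, coe_filter, mem_univ, true_and, Set.mem_ofPred_eq] at hq
    rw [Pi.add_apply, Pi.single_eq_same, Pi.single_eq_of_ne hq.1, add_zero] at hq1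
    simp only [coe_insert, coe_singleton, Set.mem_insert_iff, Set.mem_singleton_iff]
    by_contra! hne
    simp [hne.1, hne.2, hm] at hq1
  · intro q hq q' hq' h
    have h2 := (hsum q hq).trans (hsum q' hq').symm
    rw [show q.1 = q'.1 from h] at h2
    exact Prod.ext h (Pi.single_left_injective hm (add_left_cancel h2))

end SingleSums

theorem exists_ne_pair_notMem_of_card_lt {α : Type*} [DecidableEq α] (A B : Finset α)
    (bad : Finset (α × α)) (h : #bad + #A < #A * #B) :
    ∃ a ∈ A, ∃ b ∈ B, a ≠ b ∧ (a, b) ∉ bad := by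
  have hdiag : #((A ×ˢ B).filter fun q => q.1 = q.2) ≤ #A := by
    refine card_le_card_of_injOn Prod.fst (fun q hq => ?_) fun q hq q' hq' h => ?_
    · exact (mem_product.1 (mem_filter.1 hq).1).1
    · simp only [coe_filter, Set.mem_ofPred_eq] at hq hq'
      exact Prod.ext h (hq.2.symm.trans (h.trans hq'.2))
  have hsplit := card_filter_add_card_filter_not (s := A ×ˢ B) fun q => q.1 = q.2
  rw [card_product] at hsplit
  obtain ⟨⟨a, b⟩, hq, hbad⟩ :=
    exists_mem_notMem_of_card_lt_card (s := bad) (t := (A ×ˢ B).filter fun q => ¬q.1 = q.2)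
      (by omega)
  simp only [mem_filter, mem_product] at hq
  exact ⟨a, hq.1.1, b, hq.1.2, hq.2, hbad⟩

namespace SimpleGraph

variable {V : Type} (G : SimpleGraph V) {u v : V}

theorem isOddAt_iff_colourParity_ne_zero [Fintype V] {α : Type} [DecidableEq α] (c : V → α)
    (w : V) :
    G.IsOddAt c w ↔ colourParity c (G.neighborFinset w) ≠ 0 := by
  rw [colourParity_ne_zero_iff, IsOddAt]
  congr! 4
  ext
  simp

theorem isOddAt_of_odd_degree_s8 [Fintype V] {α : Type} [DecidableEq α] {c : V → α} {w : V}
    (hw : Odd (G.degree w)) : G.IsOddAt c w := by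
  rw [isOddAt_iff_colourParity_ne_zero]
  exact colourParity_ne_zero_of_odd_card (by rwa [card_neighborFinset_eq_degree])

def contractEdge (huv : u ≠ v) : SimpleGraph {x : V // x ≠ v} :=
  fromRel fun x y => G.Adj x.1 y.1 ∨ (x = ⟨u, huv⟩ ∧ G.Adj v y.1)

theorem contractEdge_adj_of_adj (huv : u ≠ v) {x y : {x : V // x ≠ v}} (hxy : G.Adj x y) :
    (G.contractEdge huv).Adj x y :=
  (fromRel_adj _ x y).2 ⟨fun h => hxy.ne (congrArg Subtype.val h), Or.inl (Or.inl hxy)⟩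

theorem map_neighborFinset_contractEdge [Fintype V] [DecidableEq V] (huv : u ≠ v)
    {w : {x : V // x ≠ v}} (hwu : w.1 ≠ u) (hwv : ¬G.Adj w v) :
    ((G.contractEdge huv).neighborFinset w).map (Function.Embedding.subtype _) =
      G.neighborFinset w := by
  ext z
  simp only [mem_map, mem_neighborFinset, Function.Embedding.coe_subtype]
  simp only [contractEdge, fromRel_adj]
  constructor
  · rintro ⟨y, ⟨-, (hwy | ⟨hw, -⟩) | (hyw | ⟨hy, hvw⟩)⟩, rfl⟩
    · exact hwy
    · exact absurd (congrArg Subtype.val hw) hwu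
    · exact hyw.symm
    · exact absurd hvw.symm hwv
  · intro hwz
    have hzv : z ≠ v := by rintro rfl; exact hwv hwz
    exact ⟨⟨z, hzv⟩, ⟨fun h => hwz.ne (congrArg Subtype.val h), Or.inl (Or.inl hwz)⟩, rfl⟩

theorem colourParity_ne_zero_of_contractEdge [Fintype V] [DecidableEq V] {α : Type}
    [DecidableEq α] (huv : u ≠ v) {c : V → α}
    (hc : (G.contractEdge huv).IsProperOdd (c ∘ Subtype.val)) {w : V} (hwu : w ≠ u)
    (hwv : w ≠ v) (hw : ¬G.Adj w v) (hdeg : 0 < G.degree w) :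
    colourParity c (G.neighborFinset w) ≠ 0 := by
  have hmap := G.map_neighborFinset_contractEdge huv (w := ⟨w, hwv⟩) hwu hw
  have hodd := hc.2 ⟨w, hwv⟩ (by rwa [← card_neighborFinset_eq_degree, ← card_map, hmap])
  rwa [isOddAt_iff_colourParity_ne_zero, ← Function.Embedding.coe_subtype, ← colourParity_map,
    hmap] at hodd

theorem isProper_update_update [DecidableEq V] {α : Type*} (huv : u ≠ v) {c : V → α}
    (hc : ∀ x y, G.Adj x y → x ≠ v → y ≠ v → c x ≠ c y) {a b : α} (hba : b ≠ a)
    (hb : ∀ z, G.Adj u z → z ≠ v → c z ≠ b) (ha : ∀ z, G.Adj v z → z ≠ u → c z ≠ a) {x y : V}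
    (hxy : G.Adj x y) :
    Function.update (Function.update c u b) v a x ≠
      Function.update (Function.update c u b) v a y := by
  set c' := Function.update (Function.update c u b) v a
  have hc'u : c' u = b := by simp [c', huv]
  have hc'v : c' v = a := by simp [c']
  have hc' : ∀ z, z ≠ u → z ≠ v → c' z = c z := fun z hzu hzv => by simp [c', hzu, hzv]
  have hend : ∀ x y, G.Adj x y → x = u ∨ x = v → c' x ≠ c' y := by
    rintro x y hxy (rfl | rfl)
    · by_cases hyv : y = v
      · rw [hyv, hc'u, hc'v]; exact hba
      · rw [hc'u, hc' y (G.ne_of_adj hxy).symm hyv]; exact (hb y hxy hyv).symm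
    · by_cases hyu : y = u
      · rw [hyu, hc'u, hc'v]; exact hba.symm
      · rw [hc'v, hc' y hyu (G.ne_of_adj hxy).symm]; exact (ha y hxy hyu).symm
  by_cases hx : x = u ∨ x = v
  · exact hend x y hxy hx
  by_cases hy : y = u ∨ y = v
  · exact (hend y x hxy.symm hy).symm
  rw [not_or] at hx hy
  rw [hc' x hx.1 hx.2, hc' y hy.1 hy.2]
  exact hc x y hxy hx.2 hy.2

section Recolouring

variable [Fintype V] [DecidableEq V] {α : Type} [DecidableEq α]

/-- `N(w) \ {u, v}` is the part of `N(w)` whose colours survive recolouring `u` and `v`. -/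
noncomputable def residualParity (c : V → α) (u v w : V) : α → ZMod 2 :=
  colourParity c (G.neighborFinset w \ {u, v})

theorem residualParity_comm (c : V → α) (u v w : V) :
    G.residualParity c u v w = G.residualParity c v u w := by
  rw [residualParity, residualParity, pair_comm]

/-- Colours that `u` may not take: those of its other neighbours, and those that would leave a
neighbour `w ∉ N(v)` of `u` with every colour appearing evenly often around it. -/
noncomputable def forbiddenColours [Fintype α] (c : V → α) (u v : V) : Finset α :=
  ((G.neighborFinset u).erase v).image c ∪
    ((G.neighborFinset u \ G.neighborFinset v).erase v).biUnion fun w =>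
      univ.filter fun b => G.residualParity c u v w + Pi.single b 1 = 0

/-- Colour pairs for `(u, v)` that would leave a common neighbour with every colour appearing
evenly often around it. -/
noncomputable def badPairs [Fintype α] (c : V → α) (u v : V) : Finset (α × α) :=
  (G.neighborFinset u ∩ G.neighborFinset v).biUnion fun w =>
    univ.filter fun q => q.1 ≠ q.2 ∧
      G.residualParity c u v w + Pi.single q.1 1 + Pi.single q.2 1 = 0

theorem card_forbiddenColours_add_le [Fintype α] (c : V → α) (huv : G.Adj u v) :
    #(G.forbiddenColours c u v) + #(G.neighborFinset u ∩ G.neighborFinset v) + 2 ≤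
      2 * G.degree u := by
  have hclash : #(((G.neighborFinset u).erase v).image c) + 1 ≤ G.degree u := by
    grw [card_image_le, card_erase_add_one (by simpa using huv), card_neighborFinset_eq_degree]
  have hprivate :
      #(((G.neighborFinset u \ G.neighborFinset v).erase v).biUnion fun w =>
        univ.filter fun b => G.residualParity c u v w + Pi.single b 1 = 0) + 1 ≤
        #(G.neighborFinset u \ G.neighborFinset v) := by
    grw [card_biUnion_le_card_mul _ _ _ fun w _ =>
      card_filter_add_single_eq_zero_le_one one_ne_zero _, mul_one,
      card_erase_add_one (by simpa using huv)]
  have hsplit := card_sdiff_add_card_inter (G.neighborFinset u) (G.neighborFinset v)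
  rw [card_neighborFinset_eq_degree] at hsplit
  grw [forbiddenColours, card_union_le]
  omega

theorem card_badPairs_le [Fintype α] (c : V → α) (u v : V) :
    #(G.badPairs c u v) ≤ 2 * #(G.neighborFinset u ∩ G.neighborFinset v) := by
  grw [badPairs, card_biUnion_le_card_mul _ _ _ fun w _ =>
    card_filter_add_single_add_single_eq_zero_le_two one_ne_zero _, mul_comm]

theorem isOddAt_update_update [Fintype α] (huv : u ≠ v) {c : V → α}
    (hc : (G.contractEdge huv).IsProperOdd (c ∘ Subtype.val)) {a b : α} (hba : b ≠ a)
    (hb : b ∉ G.forbiddenColours c u v) (ha : a ∉ G.forbiddenColours c v u)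
    (hbad : (b, a) ∉ G.badPairs c u v) {w : V} (hwu : w ≠ u) (hwv : w ≠ v)
    (hdeg : 0 < G.degree w) :
    G.IsOddAt (Function.update (Function.update c u b) v a) w := by
  rw [isOddAt_iff_colourParity_ne_zero, colourParity_update_update _ _ huv,
    ← residualParity]
  by_cases hu : G.Adj w u <;> by_cases hv : G.Adj w v <;>
    simp only [mem_neighborFinset, hu, hv, if_true, if_false, add_zero] <;> intro h
  · refine hbad (mem_biUnion.2 ⟨w, ?_, ?_⟩)
    · simpa using ⟨hu.symm, hv.symm⟩
    · simpa [h] using hba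
  · refine hb (mem_union_right _ (mem_biUnion.2 ⟨w, ?_, ?_⟩))
    · simpa [hwv] using ⟨hu.symm, fun h => hv h.symm⟩
    · simpa using h
  · refine ha (mem_union_right _ (mem_biUnion.2 ⟨w, ?_, ?_⟩))
    · simpa [hwu] using ⟨hv.symm, fun h => hu h.symm⟩
    · simpa [G.residualParity_comm c v u] using h
  · refine G.colourParity_ne_zero_of_contractEdge huv hc hwu hwv hv hdeg ?_
    rwa [residualParity, sdiff_eq_self_of_disjoint (by simp [hu, hv])] at h

end Recolouring

theorem hasNice_of_hasNice_contractEdge [Fintype V] [DecidableEq V] (huv : G.Adj u v)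
    (hu : G.degree u = 5) (hv : G.degree v = 5)
    (hk : 2 ≤ #(G.neighborFinset u ∩ G.neighborFinset v))
    (hH : (G.contractEdge huv.ne).HasNice) : G.HasNice := by
  obtain ⟨c', hc⟩ := hH
  obtain ⟨c, rfl⟩ : ∃ c : V → Fin 9, c ∘ Subtype.val = c' :=
    ⟨_, Function.extend_comp Subtype.val_injective c' 0⟩
  obtain ⟨b, hb, a, ha, hba, hbad⟩ := exists_ne_pair_notMem_of_card_lt
    (G.forbiddenColours c u v)ᶜ (G.forbiddenColours c v u)ᶜ (G.badPairs c u v) (by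
      have hB := G.card_forbiddenColours_add_le c huv
      have hA := G.card_forbiddenColours_add_le c huv.symm
      have hbad := G.card_badPairs_le c u v
      have hB' := card_compl_add_card (G.forbiddenColours c u v)
      have hA' := card_compl_add_card (G.forbiddenColours c v u)
      rw [inter_comm] at hA
      rw [Fintype.card_fin] at hA' hB'
      nlinarith)
  rw [mem_compl] at ha hb
  refine ⟨Function.update (Function.update c u b) v a, fun x y hxy => ?_, fun w hw => ?_⟩
  · refine G.isProper_update_update huv.ne (fun x y hxy hx hy => ?_) hba (fun z hz hzv h => ?_)
      (fun z hz hzu h => ?_) hxy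
    · exact hc.1 ⟨x, hx⟩ ⟨y, hy⟩ (G.contractEdge_adj_of_adj huv.ne hxy)
    · exact hb (mem_union_left _ (mem_image.2 ⟨z, by simpa [hzv] using hz, h⟩))
    · exact ha (mem_union_left _ (mem_image.2 ⟨z, by simpa [hzu] using hz, h⟩))
  by_cases hwu : w = u
  · exact G.isOddAt_of_odd_degree_s8 (by rw [hwu, hu]; decide)
  by_cases hwv : w = v
  · exact G.isOddAt_of_odd_degree_s8 (by rw [hwv, hv]; decide)
  exact G.isOddAt_update_update huv.ne hc hba hb ha hbad hwu hwv hw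

end SimpleGraph

theorem min_counterexample_no_adjacent_five_vertices_general
    (Toroidal : ∀ (W : Type) [Fintype W] [DecidableEq W], SimpleGraph W → Prop)
    {V : Type} [Fintype V] [DecidableEq V] (G : SimpleGraph V)
    (hcontract : ∀ (v u : V) (hvu : G.Adj v u),
      Toroidal {x : V // x ≠ v}
        (SimpleGraph.fromRel fun x y : {x : V // x ≠ v} =>
          G.Adj x.1 y.1 ∨ (x = ⟨u, hvu.ne'⟩ ∧ G.Adj v y.1)))
    (hno : ¬ G.HasNice)
    (hmin : ∀ (W : Type) [Fintype W] [DecidableEq W] (H : SimpleGraph W),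
      Toroidal W H → Fintype.card W < Fintype.card V → H.HasNice) :
    ¬ ∃ u v x y : V, G.Adj u v ∧ G.degree u = 5 ∧ G.degree v = 5 ∧ x ≠ y ∧
      G.Adj u x ∧ G.Adj v x ∧ G.Adj u y ∧ G.Adj v y := by
  rintro ⟨u, v, x, y, huv, hu, hv, hxy, hux, hvx, huy, hvy⟩
  have hk : 2 ≤ #(G.neighborFinset u ∩ G.neighborFinset v) := by
    rw [← card_pair hxy]
    exact card_le_card (by simp [insert_subset_iff, hux, hvx, huy, hvy])
  have hcard : Fintype.card {x : V // x ≠ v} < Fintype.card V :=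
    Fintype.card_subtype_lt (x := v) (not_not.2 rfl)
  exact hno (G.hasNice_of_hasNice_contractEdge huv hu hv hk
    (hmin _ _ (hcontract v u huv.symm) hcard))

/-- A vertex-minimal toroidal graph with no nice colouring does not contain
two adjacent 5-vertices with two common neighbours. Toroidality is preserved
by edge contraction (delete `v`, join `u` to all former neighbours of `v`). -/
theorem min_counterexample_no_adjacent_five_vertices
    (Toroidal : ∀ (W : Type) [Fintype W] [DecidableEq W], SimpleGraph W → Prop)
    {V : Type} [Fintype V] [DecidableEq V] (G : SimpleGraph V)
    (hG : Toroidal V G)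
    (hcontract : ∀ (v u : V) (hvu : G.Adj v u),
      Toroidal {x : V // x ≠ v}
        (SimpleGraph.fromRel fun x y : {x : V // x ≠ v} =>
          G.Adj x.1 y.1 ∨ (x = ⟨u, hvu.ne'⟩ ∧ G.Adj v y.1)))
    (hno : ¬ G.HasNice)
    (hmin : ∀ (W : Type) [Fintype W] [DecidableEq W] (H : SimpleGraph W),
      Toroidal W H → Fintype.card W < Fintype.card V → H.HasNice) :
    ¬ ∃ u v x y : V, G.Adj u v ∧ G.degree u = 5 ∧ G.degree v = 5 ∧ x ≠ y ∧
      G.Adj u x ∧ G.Adj v x ∧ G.Adj u y ∧ G.Adj v y :=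
  min_counterexample_no_adjacent_five_vertices_general Toroidal G hcontract hno hmin
end
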